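/- Assume that for every n ≥ 1 the compound return vector R_n and the next one-period return vector X(n) are independent. Then for every integer n > 1 the optimal expected log-growth values satisfy the recursion g_n* ≤ ((n−1)/n)·g_{n−1}* + (1/n)·g_1*. -/

import Mathlib

open MeasureTheory ProbabilityTheory Filter Topology Finset Real

/-- Compound (total) return of asset `i` over the first `n` periods:
`R_{n,i}(ω) = ∏_{k=0}^{n-1} (1 + X_i(k)(ω))`. -/
noncomputable def compoundReturn {Ω : Type*} {m : ℕ} (X : ℕ → Ω → Fin m → ℝ)
    (n : ℕ) (ω : Ω) (i : Fin m) : ℝ :=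
  ∏ k ∈ Finset.range n, (1 + X k ω i)

/-- Expected logarithmic growth with rebalancing period `n`:
`g_n(K) = (1/n) E[log (Kᵀ R_n)]`. -/
noncomputable def elg {Ω : Type*} [MeasureSpace Ω] {m : ℕ} (X : ℕ → Ω → Fin m → ℝ)
    (n : ℕ) (K : Fin m → ℝ) : ℝ :=
  (n : ℝ)⁻¹ * ∫ ω, Real.log (∑ i, K i * compoundReturn X n ω i)

/-- The admissible set: the unit simplex in `ℝ^m`. -/
def simplex (m : ℕ) : Set (Fin m → ℝ) := {K | (∀ i, 0 ≤ K i) ∧ ∑ i, K i = 1}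

/-!
Split the wealth after `n + 1` periods as the wealth after `n` periods times the one-period
growth of the drifted portfolio `K_i R_{n,i} / Kᵀ R_n`. The drifted portfolio again lies in the
simplex and depends only on `R_n`, which is independent of `X(n)`; integrating first over `X(n)`
(whose law is that of `X(0)`) bounds the expected log of the second factor by `g_1^*`, while the
first factor contributes `n g_n(K) ≤ n g_n^*`.
-/

theorem ProbabilityTheory.IndepFun.integral_comp_le_of_ae_integral_le {Ω α β : Type*}
    [MeasurableSpace Ω] [MeasurableSpace α] [MeasurableSpace β] {μ : Measure Ω}
    [IsProbabilityMeasure μ]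
    {Z : Ω → α} {Y : Ω → β} (hZY : IndepFun Z Y μ) (hZ : Measurable Z) (hY : Measurable Y)
    {f : α × β → ℝ} (hf : Measurable f) (hfi : Integrable (fun ω => f (Z ω, Y ω)) μ) {c : ℝ}
    (hc : ∀ᵐ ω ∂μ, ∫ y, f (Z ω, y) ∂μ.map Y ≤ c) :
    ∫ ω, f (Z ω, Y ω) ∂μ ≤ c := by
  have hZYm : Measurable fun ω => (Z ω, Y ω) := hZ.prodMk hY
  have hprod : μ.map (fun ω => (Z ω, Y ω)) = (μ.map Z).prod (μ.map Y) :=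
    (indepFun_iff_map_prod_eq_prod_map_map hZ.aemeasurable hY.aemeasurable).1 hZY
  have hfint : Integrable f ((μ.map Z).prod (μ.map Y)) := by
    rw [← hprod, integrable_map_measure hf.aestronglyMeasurable hZYm.aemeasurable]
    exact hfi
  have hinner := hfint.integral_prod_left
  calc ∫ ω, f (Z ω, Y ω) ∂μ = ∫ p, f p ∂(μ.map Z).prod (μ.map Y) := by
        rw [← hprod, integral_map hZYm.aemeasurable hf.aestronglyMeasurable]
    _ = ∫ z, ∫ y, f (z, y) ∂μ.map Y ∂μ.map Z := integral_prod f hfint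
    _ = ∫ ω, ∫ y, f (Z ω, y) ∂μ.map Y ∂μ := integral_map hZ.aemeasurable hinner.1
    _ ≤ ∫ _ω, c ∂μ :=
        integral_mono_ae ((integrable_map_measure hinner.1 hZ.aemeasurable).1 hinner)
          (integrable_const c) hc
    _ = c := by simp

section Simplex

variable {m : ℕ} {K r : Fin m → ℝ}

theorem simplex_nonempty (hm : 0 < m) : (simplex m).Nonempty :=
  ⟨fun _ => (m : ℝ)⁻¹, fun _ => by positivity, by simp; field_simp⟩

theorem sum_mul_mem_Icc_of_mem_simplex (hK : K ∈ simplex m) {a b : ℝ}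
    (hr : ∀ i, r i ∈ Set.Icc a b) : ∑ i, K i * r i ∈ Set.Icc a b := by
  obtain ⟨hK0, hK1⟩ := hK
  have hconst (c : ℝ) : ∑ i, K i * c = c := by rw [← Finset.sum_mul, hK1, one_mul]
  constructor
  · calc a = ∑ i, K i * a := (hconst a).symm
      _ ≤ ∑ i, K i * r i := by gcongr with i; exacts [hK0 i, (hr i).1]
  · calc ∑ i, K i * r i ≤ ∑ i, K i * b := by gcongr with i; exacts [hK0 i, (hr i).2]
      _ = b := hconst b

theorem sum_mul_pos_of_mem_simplex (hK : K ∈ simplex m) (hr : ∀ i, 0 < r i) :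
    0 < ∑ i, K i * r i := by
  obtain ⟨i, -, hi⟩ := Finset.exists_ne_zero_of_sum_ne_zero (hK.2 ▸ one_ne_zero)
  exact Finset.sum_pos' (fun j _ => mul_nonneg (hK.1 j) (hr j).le)
    ⟨i, Finset.mem_univ i, mul_pos ((hK.1 i).lt_of_ne' hi) (hr i)⟩

/-- The weights of the portfolio `K` after its holdings have grown by the factors `r` without
rebalancing. -/
noncomputable def driftedWeights (K r : Fin m → ℝ) : Fin m → ℝ :=
  fun i => K i * r i / ∑ j, K j * r j

theorem driftedWeights_mem_simplex (hK : K ∈ simplex m) (hr : ∀ i, 0 < r i) :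
    driftedWeights K r ∈ simplex m := by
  have hS := sum_mul_pos_of_mem_simplex hK hr
  refine ⟨fun i => div_nonneg (mul_nonneg (hK.1 i) (hr i).le) hS.le, ?_⟩
  unfold driftedWeights
  rw [← Finset.sum_div, div_self hS.ne']

theorem log_sum_mul_mul_eq_add_log_sum_driftedWeights_mul (hK : K ∈ simplex m)
    (hr : ∀ i, 0 < r i) {x : Fin m → ℝ} (hx : ∀ i, 0 < x i) :
    log (∑ i, K i * (r i * x i)) =
      log (∑ i, K i * r i) + log (∑ i, driftedWeights K r i * x i) := by
  have hS := sum_mul_pos_of_mem_simplex hK hr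
  have hT := sum_mul_pos_of_mem_simplex (driftedWeights_mem_simplex hK hr) hx
  have hsplit : ∑ i, K i * (r i * x i) = (∑ i, K i * r i) * ∑ i, driftedWeights K r i * x i := by
    rw [Finset.mul_sum]
    refine Finset.sum_congr rfl fun i _ => ?_
    rw [driftedWeights]
    field_simp
  rw [hsplit, log_mul hS.ne' hT.ne']

end Simplex

section CompoundReturn

variable {Ω : Type*} {m : ℕ} {X : ℕ → Ω → Fin m → ℝ}

theorem compoundReturn_succ (n : ℕ) (ω : Ω) (i : Fin m) :
    compoundReturn X (n + 1) ω i = compoundReturn X n ω i * (1 + X n ω i) :=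
  Finset.prod_range_succ _ _

theorem compoundReturn_one (ω : Ω) (i : Fin m) : compoundReturn X 1 ω i = 1 + X 0 ω i :=
  Finset.prod_range_one _

theorem compoundReturn_pos {ω : Ω} (hω : ∀ k i, 0 < 1 + X k ω i) (n : ℕ) (i : Fin m) :
    0 < compoundReturn X n ω i :=
  Finset.prod_pos fun k _ => hω k i

theorem compoundReturn_mem_Icc {ω : Ω} {a b : ℝ} (ha : 0 ≤ a)
    (hω : ∀ k i, 1 + X k ω i ∈ Set.Icc a b) (n : ℕ) (i : Fin m) :
    compoundReturn X n ω i ∈ Set.Icc (a ^ n) (b ^ n) := by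
  constructor
  · calc a ^ n = ∏ _k ∈ range n, a := by simp
      _ ≤ compoundReturn X n ω i := Finset.prod_le_prod (fun _ _ => ha) fun k _ => (hω k i).1
  · calc compoundReturn X n ω i ≤ ∏ _k ∈ range n, b :=
          Finset.prod_le_prod (fun k _ => ha.trans (hω k i).1) fun k _ => (hω k i).2
      _ = b ^ n := by simp

theorem log_sum_mul_compoundReturn_mem_Icc {ω : Ω} {a b : ℝ} (ha : 0 < a)
    (hω : ∀ k i, 1 + X k ω i ∈ Set.Icc a b) {K : Fin m → ℝ} (hK : K ∈ simplex m) (n : ℕ) :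
    log (∑ i, K i * compoundReturn X n ω i) ∈ Set.Icc (n * log a) (n * log b) := by
  have hS := sum_mul_mem_Icc_of_mem_simplex hK (compoundReturn_mem_Icc ha.le hω n)
  rw [← log_pow, ← log_pow]
  exact ⟨log_le_log (pow_pos ha n) hS.1, log_le_log ((pow_pos ha n).trans_le hS.1) hS.2⟩

theorem measurable_compoundReturn [MeasurableSpace Ω] (hX : ∀ k, Measurable (X k)) (n : ℕ) :
    Measurable fun ω => compoundReturn X n ω := by
  unfold compoundReturn
  fun_prop

end CompoundReturn

theorem exists_pos_ae_one_add_mem_Icc {Ω : Type*} [MeasurableSpace Ω] {μ : Measure Ω} {m : ℕ}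
    (hm : 0 < m) {X : ℕ → Ω → Fin m → ℝ} {Xmin Xmax : Fin m → ℝ} (hXmin : ∀ i, -1 < Xmin i)
    (hbdd : ∀ k, ∀ᵐ ω ∂μ, ∀ i, Xmin i ≤ X k ω i ∧ X k ω i ≤ Xmax i) :
    ∃ a b : ℝ, 0 < a ∧ ∀ᵐ ω ∂μ, ∀ k i, 1 + X k ω i ∈ Set.Icc a b := by
  have : Nonempty (Fin m) := ⟨⟨0, hm⟩⟩
  obtain ⟨i₀, hi₀⟩ := Finite.exists_min Xmin
  obtain ⟨c, hc⟩ := Finite.exists_le Xmax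
  refine ⟨1 + Xmin i₀, 1 + c, by linarith [hXmin i₀], ae_all_iff.2 fun k => ?_⟩
  filter_upwards [hbdd k] with ω hω i
  exact ⟨by linarith [hi₀ i, (hω i).1], by linarith [hc i, (hω i).2]⟩

theorem elg_one_eq_integral_map {Ω : Type*} [MeasureSpace Ω] {m : ℕ} {X : ℕ → Ω → Fin m → ℝ}
    {k : ℕ} (hX0 : Measurable (X 0)) (hident : IdentDistrib (X k) (X 0) ℙ ℙ) (w : Fin m → ℝ) :
    elg X 1 w = ∫ x, log (∑ i, w i * (1 + x i)) ∂(ℙ : Measure Ω).map (X k) := by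
  have hlog : Measurable fun x : Fin m → ℝ => log (∑ i, w i * (1 + x i)) := by fun_prop
  rw [hident.map_eq, integral_map hX0.aemeasurable hlog.aestronglyMeasurable]
  simp [elg, compoundReturn_one]

section BoundedReturns

variable {Ω : Type*} [MeasureSpace Ω] [IsProbabilityMeasure (ℙ : Measure Ω)] {m : ℕ}
  {X : ℕ → Ω → Fin m → ℝ} {a b : ℝ} {K : Fin m → ℝ}

theorem integrable_log_sum_mul_compoundReturn (hXm : ∀ k, Measurable (X k)) (ha : 0 < a)
    (hX : ∀ᵐ ω ∂(ℙ : Measure Ω), ∀ k i, 1 + X k ω i ∈ Set.Icc a b) (hK : K ∈ simplex m)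
    (n : ℕ) : Integrable (fun ω => log (∑ i, K i * compoundReturn X n ω i)) := by
  have hmeas := measurable_compoundReturn hXm n
  exact Integrable.of_mem_Icc _ _ (by fun_prop)
    (hX.mono fun ω hω => log_sum_mul_compoundReturn_mem_Icc ha hω hK n)

theorem elg_le_log (hXm : ∀ k, Measurable (X k)) (ha : 0 < a)
    (hX : ∀ᵐ ω ∂(ℙ : Measure Ω), ∀ k i, 1 + X k ω i ∈ Set.Icc a b) (hK : K ∈ simplex m)
    {n : ℕ} (hn : 0 < n) : elg X n K ≤ log b := by
  rw [elg, inv_mul_le_iff₀ (by positivity)]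
  calc ∫ ω, log (∑ i, K i * compoundReturn X n ω i) ≤ ∫ _ω, n * log b :=
        integral_mono_ae (integrable_log_sum_mul_compoundReturn hXm ha hX hK n)
          (integrable_const _)
          (hX.mono fun ω hω => (log_sum_mul_compoundReturn_mem_Icc ha hω hK n).2)
    _ = n * log b := by simp

theorem bddAbove_elg_image (hXm : ∀ k, Measurable (X k)) (ha : 0 < a)
    (hX : ∀ᵐ ω ∂(ℙ : Measure Ω), ∀ k i, 1 + X k ω i ∈ Set.Icc a b) {n : ℕ} (hn : 0 < n) :
    BddAbove (elg X n '' simplex m) :=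
  ⟨log b, by rintro _ ⟨K, hK, rfl⟩; exact elg_le_log hXm ha hX hK hn⟩

theorem integral_log_sum_mul_compoundReturn_succ_le (hXm : ∀ k, Measurable (X k)) (ha : 0 < a)
    (hX : ∀ᵐ ω ∂(ℙ : Measure Ω), ∀ k i, 1 + X k ω i ∈ Set.Icc a b) {n : ℕ}
    (hident : IdentDistrib (X n) (X 0) ℙ ℙ)
    (hind : IndepFun (fun ω => compoundReturn X n ω) (X n) ℙ) (hK : K ∈ simplex m) :
    ∫ ω, log (∑ i, K i * compoundReturn X (n + 1) ω i) ≤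
      (∫ ω, log (∑ i, K i * compoundReturn X n ω i)) + sSup (elg X 1 '' simplex m) := by
  set F : (Fin m → ℝ) × (Fin m → ℝ) → ℝ :=
    fun p => log (∑ i, driftedWeights K p.1 i * (1 + p.2 i))
  have hRm := measurable_compoundReturn hXm n
  have hFm : Measurable F := by
    simp only [F, driftedWeights]
    fun_prop
  have hpos : ∀ᵐ ω ∂(ℙ : Measure Ω), ∀ k i, 0 < 1 + X k ω i :=
    hX.mono fun ω hω k i => ha.trans_le (hω k i).1
  have hsplit : ∀ᵐ ω ∂(ℙ : Measure Ω), log (∑ i, K i * compoundReturn X (n + 1) ω i) =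
      log (∑ i, K i * compoundReturn X n ω i) + F (compoundReturn X n ω, X n ω) := by
    filter_upwards [hpos] with ω hω
    simp only [compoundReturn_succ, F]
    exact log_sum_mul_mul_eq_add_log_sum_driftedWeights_mul hK (compoundReturn_pos hω n)
      fun i => hω n i
  have hFint : Integrable (fun ω => F (compoundReturn X n ω, X n ω)) := by
    refine ((integrable_log_sum_mul_compoundReturn hXm ha hX hK (n + 1)).sub
      (integrable_log_sum_mul_compoundReturn hXm ha hX hK n)).congr ?_
    filter_upwards [hsplit] with ω hω
    rw [Pi.sub_apply, hω, add_sub_cancel_left]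
  have hF : ∫ ω, F (compoundReturn X n ω, X n ω) ≤ sSup (elg X 1 '' simplex m) := by
    refine hind.integral_comp_le_of_ae_integral_le hRm (hXm n) hFm hFint ?_
    filter_upwards [hpos] with ω hω
    have hw := driftedWeights_mem_simplex hK (compoundReturn_pos hω n)
    have hle := le_csSup (bddAbove_elg_image hXm ha hX one_pos) ⟨_, hw, rfl⟩
    rwa [elg_one_eq_integral_map (hXm 0) hident] at hle
  calc ∫ ω, log (∑ i, K i * compoundReturn X (n + 1) ω i)
      = (∫ ω, log (∑ i, K i * compoundReturn X n ω i)) +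
          ∫ ω, F (compoundReturn X n ω, X n ω) := by
        rw [integral_congr_ae hsplit,
          integral_add (integrable_log_sum_mul_compoundReturn hXm ha hX hK n) hFint]
    _ ≤ _ := add_le_add_right hF _

theorem elg_succ_le (hXm : ∀ k, Measurable (X k)) (ha : 0 < a)
    (hX : ∀ᵐ ω ∂(ℙ : Measure Ω), ∀ k i, 1 + X k ω i ∈ Set.Icc a b) {n : ℕ} (hn : 0 < n)
    (hident : IdentDistrib (X n) (X 0) ℙ ℙ)
    (hind : IndepFun (fun ω => compoundReturn X n ω) (X n) ℙ) (hK : K ∈ simplex m) :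
    elg X (n + 1) K ≤
      n / (n + 1) * sSup (elg X n '' simplex m) + (n + 1 : ℝ)⁻¹ * sSup (elg X 1 '' simplex m) := by
  have hstep := integral_log_sum_mul_compoundReturn_succ_le hXm ha hX hident hind hK
  have hprev : ∫ ω, log (∑ i, K i * compoundReturn X n ω i) = n * elg X n K := by
    rw [elg, mul_inv_cancel_left₀ (by positivity)]
  have hle : elg X n K ≤ sSup (elg X n '' simplex m) :=
    le_csSup (bddAbove_elg_image hXm ha hX hn) ⟨K, hK, rfl⟩
  rw [elg, Nat.cast_add_one]
  calc ((n : ℝ) + 1)⁻¹ * ∫ ω, log (∑ i, K i * compoundReturn X (n + 1) ω i)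
      ≤ ((n : ℝ) + 1)⁻¹ * (n * sSup (elg X n '' simplex m) + sSup (elg X 1 '' simplex m)) := by
        gcongr
        rw [hprev] at hstep
        exact hstep.trans (by gcongr)
    _ = _ := by field_simp

end BoundedReturns

theorem elg_opt_recursion_general
    {Ω : Type*} [MeasureSpace Ω] [IsProbabilityMeasure (ℙ : Measure Ω)]
    {m : ℕ} (hm : 2 ≤ m)
    (X : ℕ → Ω → Fin m → ℝ)
    (hmeas : ∀ k, Measurable (X k))
    (hident : ∀ k, IdentDistrib (X k) (X 0) ℙ ℙ)
    (Xmin Xmax : Fin m → ℝ)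
    (hXmin : ∀ i, -1 < Xmin i)
    (hbdd : ∀ k, ∀ᵐ ω ∂(ℙ : Measure Ω), ∀ i, Xmin i ≤ X k ω i ∧ X k ω i ≤ Xmax i)
    (hRindep : ∀ n : ℕ, 1 ≤ n →
      IndepFun (fun ω => compoundReturn X n ω) (X n) ℙ) :
    ∀ n : ℕ, 1 < n →
      sSup (elg X n '' simplex m) ≤
        (((n : ℝ) - 1) / n) * sSup (elg X (n - 1) '' simplex m) +
          (n : ℝ)⁻¹ * sSup (elg X 1 '' simplex m) := by
  intro n hn
  obtain ⟨k, rfl⟩ : ∃ k, n = k + 1 := ⟨n - 1, by omega⟩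
  obtain ⟨a, b, ha, hX⟩ := exists_pos_ae_one_add_mem_Icc (by omega) hXmin hbdd
  refine csSup_le ((simplex_nonempty (by omega)).image _) ?_
  rintro _ ⟨K, hK, rfl⟩
  simpa only [Nat.cast_add_one, add_sub_cancel_right, Nat.add_sub_cancel] using
    elg_succ_le hmeas ha hX (by omega) (hident k) (hRindep k (by omega)) hK

/-- The recursion for the optimal ELG values: under the independence hypothesis on `R_n` and
`X(n)`, one has `g_n^* ≤ ((n-1)/n) g_{n-1}^* + (1/n) g_1^*` for every `n > 1`. -/
theorem elg_opt_recursion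
    {Ω : Type*} [MeasureSpace Ω] [IsProbabilityMeasure (ℙ : Measure Ω)]
    {m : ℕ} (hm : 2 ≤ m)
    (X : ℕ → Ω → Fin m → ℝ)
    (hmeas : ∀ k, Measurable (X k))
    (hiid : iIndepFun X ℙ)
    (hident : ∀ k, IdentDistrib (X k) (X 0) ℙ ℙ)
    (Xmin Xmax : Fin m → ℝ)
    (hXmin : ∀ i, -1 < Xmin i)
    (hbdd : ∀ k, ∀ᵐ ω ∂(ℙ : Measure Ω), ∀ i, Xmin i ≤ X k ω i ∧ X k ω i ≤ Xmax i)
    (hRindep : ∀ n : ℕ, 1 ≤ n →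
      IndepFun (fun ω => compoundReturn X n ω) (X n) ℙ) :
    ∀ n : ℕ, 1 < n →
      sSup (elg X n '' simplex m) ≤
        (((n : ℝ) - 1) / n) * sSup (elg X (n - 1) '' simplex m) +
          (n : ℝ)⁻¹ * sSup (elg X 1 '' simplex m) :=
  elg_opt_recursion_general hm X hmeas hident Xmin Xmax hXmin hbdd hRindep
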